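/- Let c₅ ∈ ℝ and H(u,v) = e^{−2v}(u² − v − 1/2 − c₅). Then for all (u,v) ∈ ℝ²: ∂H/∂u (u,v) = 2u e^{−2v} and ∂H/∂v (u,v) = e^{−2v}(2v − 2u² + 2c₅); consequently the vector field of the unperturbed blow-up system satisfies the non-canonical Hamiltonian relations v − u² + c₅ = (1/2) e^{2v} ∂H/∂v (u,v) and −u = −(1/2) e^{2v} ∂H/∂u (u,v). -/

import Mathlib

open Real

/-- Hamiltonian of the unperturbed blow-up system. -/
noncomputable def Ham (c₅ u v : ℝ) : ℝ :=
  Real.exp (-2 * v) * (u ^ 2 - v - 1 / 2 - c₅)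

theorem hasDerivAt_ham_fst (c₅ u v : ℝ) :
    HasDerivAt (fun x => Ham c₅ x v) (2 * u * exp (-2 * v)) u := by
  have hpoly : HasDerivAt (fun x : ℝ => x ^ 2 - v - 1 / 2 - c₅) (2 * u) u := by
    simpa using (((hasDerivAt_pow 2 u).sub_const v).sub_const (1 / 2)).sub_const c₅
  exact (hpoly.const_mul (exp (-2 * v))).congr_deriv (by ring)

theorem hasDerivAt_ham_snd (c₅ u v : ℝ) :
    HasDerivAt (fun y => Ham c₅ u y) (exp (-2 * v) * (2 * v - 2 * u ^ 2 + 2 * c₅)) v := by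
  have hexp : HasDerivAt (fun y : ℝ => exp (-2 * y)) (-2 * exp (-2 * v)) v := by
    simpa [mul_comm] using ((hasDerivAt_id v).const_mul (-2)).exp
  have hpoly : HasDerivAt (fun y : ℝ => u ^ 2 - y - 1 / 2 - c₅) (-1) v := by
    simpa using (((hasDerivAt_id v).const_sub (u ^ 2)).sub_const (1 / 2)).sub_const c₅
  exact (hexp.mul hpoly).congr_deriv (by ring)

theorem exp_mul_exp_neg (x : ℝ) : exp x * exp (-x) = 1 := by
  rw [← exp_add, add_neg_cancel, exp_zero]

/-- The partial derivatives of the Hamiltonian, and the non-canonical Hamiltonian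
formulation of the unperturbed blow-up system `u̇ = v − u² + c₅`, `v̇ = −u`. -/
theorem ham_partials_and_noncanonical_form (c₅ u v : ℝ) :
    HasDerivAt (fun x => Ham c₅ x v) (2 * u * Real.exp (-2 * v)) u ∧
    HasDerivAt (fun y => Ham c₅ u y) (Real.exp (-2 * v) * (2 * v - 2 * u ^ 2 + 2 * c₅)) v ∧
    v - u ^ 2 + c₅
      = 1 / 2 * Real.exp (2 * v) * (Real.exp (-2 * v) * (2 * v - 2 * u ^ 2 + 2 * c₅)) ∧
    -u = -(1 / 2) * Real.exp (2 * v) * (2 * u * Real.exp (-2 * v)) := by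
  have hcancel : exp (2 * v) * exp (-2 * v) = 1 := by
    simpa only [neg_mul] using exp_mul_exp_neg (2 * v)
  refine ⟨hasDerivAt_ham_fst c₅ u v, hasDerivAt_ham_snd c₅ u v, ?_, ?_⟩
  · linear_combination (-(v - u ^ 2 + c₅)) * hcancel
  · linear_combination u * hcancel
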